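/- arXiv:0902.3065 — 7 statements merged into one kernel-verified Lean document; each statement's English description precedes it below -/
import Mathlib

section
/- For all natural numbers M ≥ 1 and l ≥ 1, the sum over h from 1 to min(M,l) of C(M,h)·C(l-1,l-h)·(M-h) equals M·C(M+l-2,l). -/
/-!
Absorption, `C(M,h)·(M-h) = M·C(M-1,h)`, pulls the factor `M` out of every term; what is left
is the Vandermonde convolution `∑_h C(M-1,h)·C(l-1,l-h) = C(M+l-2,l)`.
-/

open Finset

theorem Nat.choose_mul_sub_eq_mul_choose_pred (n k : ℕ) :
    n.choose k * (n - k) = n * (n - 1).choose k := by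
  cases n with
  | zero => simp
  | succ m => rw [Nat.add_sub_cancel, mul_comm _ (m.choose k), Nat.choose_mul_succ_eq]

theorem Nat.sum_range_choose_mul_choose_sub (m k : ℕ) :
    ∑ h ∈ range (k + 2), m.choose h * k.choose (k + 1 - h) = (m + k).choose (k + 1) := by
  rw [Nat.add_choose_eq,
    Nat.sum_antidiagonal_eq_sum_range_succ (fun i j => m.choose i * k.choose j)]

theorem Nat.sum_range_choose_mul_choose_sub_mul_sub (n k : ℕ) :
    ∑ h ∈ range (k + 2), n.choose h * k.choose (k + 1 - h) * (n - h)
      = n * (n + k - 1).choose (k + 1) := by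
  calc ∑ h ∈ range (k + 2), n.choose h * k.choose (k + 1 - h) * (n - h)
      = ∑ h ∈ range (k + 2), n * ((n - 1).choose h * k.choose (k + 1 - h)) := by
        refine sum_congr rfl fun h _ => ?_
        rw [mul_right_comm, Nat.choose_mul_sub_eq_mul_choose_pred, mul_assoc]
    _ = n * (n + k - 1).choose (k + 1) := by
        rcases Nat.eq_zero_or_pos n with rfl | hn
        · simp
        · rw [← mul_sum, Nat.sum_range_choose_mul_choose_sub, Nat.sub_add_comm hn]

theorem mom_gce_count_general (M l : ℕ) (hl : 1 ≤ l) :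
    ∑ h ∈ Finset.Icc 1 (min M l),
      Nat.choose M h * Nat.choose (l - 1) (l - h) * (M - h)
      = M * Nat.choose (M + l - 2) l := by
  obtain ⟨k, rfl⟩ : ∃ k, l = k + 1 := ⟨l - 1, by omega⟩
  have hsubset : Icc 1 (min M (k + 1)) ⊆ range (k + 2) := fun h hh => by
    simp only [mem_Icc, mem_range] at hh ⊢
    omega
  -- The added terms vanish: `h = 0` through `C(k, k+1) = 0`, `h > M` through `M - h = 0`.
  have hvanish : ∀ h ∈ range (k + 2), h ∉ Icc 1 (min M (k + 1)) →
      M.choose h * k.choose (k + 1 - h) * (M - h) = 0 := fun h hh hnot => by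
    simp only [mem_Icc, mem_range, not_and, not_le] at hh hnot
    rcases Nat.eq_zero_or_pos h with rfl | hpos
    · simp
    · simp [Nat.sub_eq_zero_of_le (by omega : M ≤ h)]
  rw [Nat.add_sub_cancel, sum_subset hsubset hvanish,
    Nat.sum_range_choose_mul_choose_sub_mul_sub, show M + (k + 1) - 2 = M + k - 1 by omega]

/-- Number of GCEs that are not CEs: for M ≥ 1, l ≥ 1,
    ∑_{h=1}^{min(M,l)} C(M,h)·C(l-1,l-h)·(M-h) = M·C(M+l-2,l). -/
theorem mom_gce_count (M l : ℕ) (hM : 1 ≤ M) (hl : 1 ≤ l) :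
    ∑ h ∈ Finset.Icc 1 (min M l),
      Nat.choose M h * Nat.choose (l - 1) (l - h) * (M - h)
      = M * Nat.choose (M + l - 2) l :=
  mom_gce_count_general M l hl
end

section
/- For all natural numbers M ≥ 2, R ≥ 1 and l ≥ 1, the inequality C(M+l-2,l-1)·(M+R-1) ≥ C(M+l-1,l)·R holds if and only if l ≥ R. -/
/-!
The absorption identity `(n + 1) * C(n, k) = C(n + 1, k + 1) * (k + 1)` with `n = M + l - 2`, `k = l - 1`
lets one cancel the common positive factor `C(M + l - 2, l - 1)`, leaving the linear comparison
`(M + l - 1) * R ≤ l * (M + R - 1)`. The difference of the two sides is `(M - 1) * (l - R)`,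
and `M - 1` is positive.
-/

namespace Nat

theorem succ_choose_succ_mul_le_choose_mul_iff {n k : ℕ} (hk : k ≤ n) (a b : ℕ) :
    (n + 1).choose (k + 1) * a ≤ n.choose k * b ↔ (n + 1) * a ≤ (k + 1) * b := by
  have hchoose : 0 < n.choose k := choose_pos hk
  calc (n + 1).choose (k + 1) * a ≤ n.choose k * b
      ↔ (n + 1).choose (k + 1) * a * (k + 1) ≤ n.choose k * b * (k + 1) :=
        (Nat.mul_le_mul_right_iff k.succ_pos).symm
    _ ↔ n.choose k * ((n + 1) * a) ≤ n.choose k * ((k + 1) * b) := by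
        have absorption := add_one_mul_choose_eq n k
        rw [show (n + 1).choose (k + 1) * a * (k + 1) = n.choose k * ((n + 1) * a) by
          rw [mul_right_comm, ← absorption]; ring, mul_right_comm, mul_assoc]
    _ ↔ (n + 1) * a ≤ (k + 1) * b := Nat.mul_le_mul_left_iff hchoose

theorem add_sub_one_mul_le_mul_add_sub_one_iff {M : ℕ} (hM : 2 ≤ M) (R l : ℕ) :
    (M + l - 1) * R ≤ l * (M + R - 1) ↔ R ≤ l := by
  obtain ⟨m, rfl⟩ : ∃ m, M = m + 2 := ⟨M - 2, by omega⟩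
  calc (m + 2 + l - 1) * R ≤ l * (m + 2 + R - 1)
      ↔ (m + 1) * R + l * R ≤ (m + 1) * l + l * R := by
        rw [show m + 2 + l - 1 = m + 1 + l by omega, show m + 2 + R - 1 = m + 1 + R by omega]
        ring_nf
    _ ↔ R ≤ l := by rw [Nat.add_le_add_iff_right, Nat.mul_le_mul_left_iff m.succ_pos]

end Nat

theorem mom_ce_pc_balance_general (M R l : ℕ) (hM : 2 ≤ M) (hl : 1 ≤ l) :
    Nat.choose (M + l - 2) (l - 1) * (M + R - 1) ≥ Nat.choose (M + l - 1) l * R ↔ R ≤ l := by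
  have cancel_choose := Nat.succ_choose_succ_mul_le_choose_mul_iff
    (n := M + l - 2) (k := l - 1) (by omega) R (M + R - 1)
  rw [show M + l - 2 + 1 = M + l - 1 by omega, Nat.sub_add_cancel hl] at cancel_choose
  rw [ge_iff_le, cancel_choose]
  exact Nat.add_sub_one_mul_le_mul_add_sub_one_iff hM R l

/-- For M ≥ 2, R ≥ 1, l ≥ 1: C(M+l-2,l-1)·(M+R-1) ≥ C(M+l-1,l)·R ↔ l ≥ R. -/
theorem mom_ce_pc_balance (M R l : ℕ) (hM : 2 ≤ M) (hR : 1 ≤ R) (hl : 1 ≤ l) :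
    Nat.choose (M + l - 2) (l - 1) * (M + R - 1) ≥ Nat.choose (M + l - 1) l * R ↔ R ≤ l :=
  mom_ce_pc_balance_general M R l hM hl
end

section
/- For all natural numbers M ≥ 2, R ≥ 1 and l ≥ 1, the inequality C(M+l-2,l)·M + C(M+l-2,l-1)·(M+R-1) ≥ C(M+l-1,l)·R holds if and only if l ≥ R - M (where R - M is taken as an integer, so the condition is automatic when R ≤ M). -/
/-!
Write `A = C(M+l-2, l)` and `B = C(M+l-2, l-1)`. Pascal's rule gives `C(M+l-1, l) = A + B`, and
the absorption identity gives `B·(M-1) = A·l`. Hence the difference of the two sides of the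
inequality is `A·M + B·(M-1) - A·R = A·(M + l - R)`, and since `A > 0` its sign is that of `M + l - R`.
-/

theorem Nat.choose_succ_mul_eq_choose_mul (n k : ℕ) :
    (n + k + 1).choose (k + 1) * (k + 1) = (n + k + 1).choose k * (n + 1) := by
  simpa [show n + k + 1 - k = n + 1 by omega] using Nat.choose_succ_right_eq (n + k + 1) k

/-- The balance identity with `M = m + 2` and `l = k + 1`, with both sides moved so that
no subtraction occurs. -/
theorem mom_balance_identity (m k R : ℕ) :
    (m + k + 1).choose (k + 1) * (m + 2) + (m + k + 1).choose k * (m + R + 1)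
        + (m + k + 1).choose (k + 1) * R
      = (m + k + 2).choose (k + 1) * R + (m + k + 1).choose (k + 1) * (m + k + 3) := by
  have absorption := Nat.choose_succ_mul_eq_choose_mul m k
  rw [Nat.choose_succ_succ' (m + k + 1) k]
  linear_combination absorption.symm

theorem mom_all_gce_balance_general (M R l : ℕ) (hM : 2 ≤ M) (hl : 1 ≤ l) :
    Nat.choose (M + l - 2) l * M + Nat.choose (M + l - 2) (l - 1) * (M + R - 1)
      ≥ Nat.choose (M + l - 1) l * R ↔ (R : ℤ) - (M : ℤ) ≤ (l : ℤ) := by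
  obtain ⟨m, rfl⟩ : ∃ m, M = m + 2 := ⟨M - 2, by omega⟩
  obtain ⟨k, rfl⟩ : ∃ k, l = k + 1 := ⟨l - 1, by omega⟩
  rw [show m + 2 + (k + 1) - 2 = m + k + 1 by omega, show m + 2 + (k + 1) - 1 = m + k + 2 by omega,
    Nat.add_sub_cancel, show m + 2 + R - 1 = m + R + 1 by omega, ge_iff_le,
    ← Nat.add_le_add_iff_right (n := (m + k + 1).choose (k + 1) * R), mom_balance_identity,
    Nat.add_le_add_iff_left,
    Nat.mul_le_mul_left_iff (Nat.choose_pos (by omega))]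
  omega

/-- Theorem 1 core: for M ≥ 2, R ≥ 1, l ≥ 1,
    C(M+l-2,l)·M + C(M+l-2,l-1)·(M+R-1) ≥ C(M+l-1,l)·R ↔ l ≥ R - M (as integers). -/
theorem mom_all_gce_balance (M R l : ℕ) (hM : 2 ≤ M) (hR : 1 ≤ R) (hl : 1 ≤ l) :
    Nat.choose (M + l - 2) l * M + Nat.choose (M + l - 2) (l - 1) * (M + R - 1)
      ≥ Nat.choose (M + l - 1) l * R ↔ (R : ℤ) - (M : ℤ) ≤ (l : ℤ) :=
  mom_all_gce_balance_general M R l hM hl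
end

section
/- For all natural numbers M ≥ 2 and R, l with 1 ≤ l < R - M, the strict inequality C(M+l-2,l)·M + C(M+l-2,l-1)·(M+R-1) < C(M+l-1,l)·R holds. -/
/-! Put `n = M+l-2` and `k = l-1`, and let `A = C(n, k+1)`, `B = C(n, k)`. Pascal's rule turns
the right-hand side into `(A + B)·R`, and absorption `A·(k+1) = B·(n-k)` turns the left-hand side
into `A·(n+2) + B·R`. The inequality is therefore `A·(n+2) < A·R`, which holds because `A > 0`
when `k < n`. -/

theorem Nat.choose_succ_mul_add_choose_mul_lt {n k R : ℕ} (hk : k < n) (hR : n + 2 < R) :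
    n.choose (k + 1) * (n - k + 1) + n.choose k * (n - k + R) < (n + 1).choose (k + 1) * R := by
  have absorb := Nat.choose_succ_right_eq n k
  calc n.choose (k + 1) * (n - k + 1) + n.choose k * (n - k + R)
      = n.choose (k + 1) * (n - k + 1 + (k + 1)) + n.choose k * R := by
        rw [mul_add (n.choose k), ← absorb]; ring
    _ = n.choose (k + 1) * (n + 2) + n.choose k * R := by
        rw [show n - k + 1 + (k + 1) = n + 2 by omega]
    _ < n.choose (k + 1) * R + n.choose k * R := by
        gcongr
        exact Nat.choose_pos hk
    _ = (n + 1).choose (k + 1) * R := by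
        rw [Nat.choose_succ_succ', add_mul, add_comm]

/-- For M ≥ 2 and 1 ≤ l < R - M the system is under-determined:
    C(M+l-2,l)·M + C(M+l-2,l-1)·(M+R-1) < C(M+l-1,l)·R. -/
theorem mom_underdetermined_all_gce (M R l : ℕ) (hM : 2 ≤ M) (hl : 1 ≤ l)
    (hlR : l < R - M) :
    Nat.choose (M + l - 2) l * M + Nat.choose (M + l - 2) (l - 1) * (M + R - 1)
      < Nat.choose (M + l - 1) l * R := by
  obtain ⟨k, rfl⟩ : ∃ k, l = k + 1 := ⟨l - 1, by omega⟩
  have key := Nat.choose_succ_mul_add_choose_mul_lt (n := M + k - 1) (k := k) (R := R)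
    (by omega) (by omega)
  rw [Nat.add_sub_cancel]
  rwa [show M + k - 1 - k + 1 = M by omega, show M + k - 1 - k + R = M + R - 1 by omega,
    show M + k - 1 + 1 = M + (k + 1) - 1 by omega, show M + k - 1 = M + (k + 1) - 2 by omega] at key
end

section
/- For all natural numbers M ≥ 2, R ≥ 1 and l ≥ 1, the inequality C(M+l-2,l) + C(M+l-2,l-1)·(M+R-1) ≥ C(M+l-1,l)·R holds if and only if l ≥ R - 1 (where R - 1 is taken as an integer, so the condition is automatic when R = 1). -/
/- Put `A = C(n+k+1, k+1)` and `B = C(n+k+1, k)`. Pascal's rule gives `C(n+k+2, k+1) = A + B`, and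
`A (k+1) = B (n+1)` turns `A + B (n+1+R)` into `A (k+2) + B R`. The terms `B R` cancel, leaving
`A R ≤ A (k+2)`, i.e. `R ≤ k+2` since `A > 0`. -/

theorem Nat.choose_succ_mul_le_choose_add_choose_mul_iff (n k R : ℕ) :
    (n + k + 2).choose (k + 1) * R
        ≤ (n + k + 1).choose (k + 1) + (n + k + 1).choose k * (n + 1 + R) ↔
      R ≤ k + 2 := by
  set A := (n + k + 1).choose (k + 1)
  set B := (n + k + 1).choose k
  have pascal : (n + k + 2).choose (k + 1) = B + A := Nat.choose_succ_succ (n + k + 1) k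
  have ratio : A * (k + 1) = B * (n + 1) := by
    simpa [show n + k + 1 - k = n + 1 by omega] using Nat.choose_succ_right_eq (n + k + 1) k
  have hA : 0 < A := Nat.choose_pos (by omega)
  have lhs : (n + k + 2).choose (k + 1) * R = A * R + B * R := by rw [pascal]; ring
  have rhs : A + B * (n + 1 + R) = A * (k + 2) + B * R := by rw [mul_add, ← ratio]; ring
  rw [lhs, rhs, Nat.add_le_add_iff_right, Nat.mul_le_mul_left_iff hA]

theorem mom_single_gce_balance_general (M R l : ℕ) (hM : 2 ≤ M) (hl : 1 ≤ l) :
    Nat.choose (M + l - 2) l + Nat.choose (M + l - 2) (l - 1) * (M + R - 1)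
      ≥ Nat.choose (M + l - 1) l * R ↔ (R : ℤ) - 1 ≤ (l : ℤ) := by
  obtain ⟨n, rfl⟩ : ∃ n, M = n + 2 := ⟨M - 2, by omega⟩
  obtain ⟨k, rfl⟩ : ∃ k, l = k + 1 := ⟨l - 1, by omega⟩
  rw [show n + 2 + (k + 1) - 2 = n + k + 1 by omega, show n + 2 + (k + 1) - 1 = n + k + 2 by omega,
    show n + 2 + R - 1 = n + 1 + R by omega, Nat.add_sub_cancel, ge_iff_le,
    Nat.choose_succ_mul_le_choose_add_choose_mul_iff]
  omega

/-- Theorem 2 core: for M ≥ 2, R ≥ 1, l ≥ 1,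
    C(M+l-2,l) + C(M+l-2,l-1)·(M+R-1) ≥ C(M+l-1,l)·R ↔ l ≥ R - 1 (as integers). -/
theorem mom_single_gce_balance (M R l : ℕ) (hM : 2 ≤ M) (hR : 1 ≤ R) (hl : 1 ≤ l) :
    Nat.choose (M + l - 2) l + Nat.choose (M + l - 2) (l - 1) * (M + R - 1)
      ≥ Nat.choose (M + l - 1) l * R ↔ (R : ℤ) - 1 ≤ (l : ℤ) :=
  mom_single_gce_balance_general M R l hM hl
end

section
/- For all natural numbers M ≥ 2, l ≥ 1, R ≥ 1 and B with 1 ≤ B ≤ M, the inequality B·C(M+l-2,l) + C(M+l-2,l-1)·(M+R-1) ≥ C(M+l-1,l)·R holds if and only if l ≥ R - B (where R - B is taken as an integer, so the condition is automatic when R ≤ B). -/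
/-!
Write `a = C(M+l-2, l)` and `b = C(M+l-2, l-1)`. Pascal's rule gives `C(M+l-1, l) = a + b`, and
the absorption identity `a * l = b * (M-1)` turns the left-hand side into `a * (B + l) + b * R`.
Hence the inequality reads `a * R ≤ a * (B + l)`, and `a > 0` because `M ≥ 2`.
-/

namespace Nat

theorem choose_add_succ_mul_succ (m k : ℕ) :
    (m + k + 1).choose (k + 1) * (k + 1) = (m + k + 1).choose k * (m + 1) := by
  rw [choose_succ_right_eq, show m + k + 1 - k = m + 1 by omega]

theorem choose_balance_iff (m k B R : ℕ) :
    (m + k + 2).choose (k + 1) * R ≤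
        B * (m + k + 1).choose (k + 1) + (m + k + 1).choose k * (m + R + 1) ↔
      R ≤ B + (k + 1) := by
  set a := (m + k + 1).choose (k + 1)
  set b := (m + k + 1).choose k
  have hpascal : (m + k + 2).choose (k + 1) = b + a := choose_succ_succ _ _
  have hrhs : B * a + b * (m + R + 1) = a * (B + (k + 1)) + b * R := by
    rw [show m + R + 1 = (m + 1) + R by ring, mul_add, ← choose_add_succ_mul_succ]
    ring
  have ha : 0 < a := choose_pos (by omega)
  rw [hpascal, hrhs, add_mul, add_comm (b * R), add_le_add_iff_right, mul_comm a R,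
    mul_comm a, Nat.mul_le_mul_right_iff ha]

end Nat

theorem mom_B_gce_balance_general (M l R B : ℕ) (hM : 2 ≤ M) (hl : 1 ≤ l) :
    B * Nat.choose (M + l - 2) l + Nat.choose (M + l - 2) (l - 1) * (M + R - 1)
      ≥ Nat.choose (M + l - 1) l * R ↔ (R : ℤ) - (B : ℤ) ≤ (l : ℤ) := by
  obtain ⟨m, rfl⟩ : ∃ m, M = m + 2 := ⟨M - 2, by omega⟩
  obtain ⟨k, rfl⟩ : ∃ k, l = k + 1 := ⟨l - 1, by omega⟩
  rw [show m + 2 + (k + 1) - 2 = m + k + 1 by omega, show m + 2 + (k + 1) - 1 = m + k + 2 by omega,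
    show m + 2 + R - 1 = m + R + 1 by omega, Nat.add_sub_cancel, ge_iff_le, Nat.choose_balance_iff]
  omega

/-- Corollary 1 core: for M ≥ 2, l ≥ 1, R ≥ 1 and 1 ≤ B ≤ M,
    B·C(M+l-2,l) + C(M+l-2,l-1)·(M+R-1) ≥ C(M+l-1,l)·R ↔ l ≥ R - B (as integers). -/
theorem mom_B_gce_balance (M l R B : ℕ) (hM : 2 ≤ M) (hl : 1 ≤ l) (hR : 1 ≤ R)
    (hB1 : 1 ≤ B) (hB2 : B ≤ M) :
    B * Nat.choose (M + l - 2) l + Nat.choose (M + l - 2) (l - 1) * (M + R - 1)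
      ≥ Nat.choose (M + l - 1) l * R ↔ (R : ℤ) - (B : ℤ) ≤ (l : ℤ) :=
  mom_B_gce_balance_general M l R B hM hl
end

section
/- For all natural numbers M ≥ 2, R ≥ 2 and l with 1 ≤ l < R - 1, the strict inequality C(M+l-2,l) + C(M+l-2,l-1)·(M+R-1) < C(M+l-1,l)·R holds. -/
/-! With `a = C(n, k)` and `b = C(n, k+1)`, Pascal's rule gives `C(n+1, k+1) = a + b` and the
ratio of consecutive binomials gives `a (n - k) = b (k + 1)`, so the inequality reduces to
`b (k + 2) < b r`, which holds as soon as `b > 0` and `k + 2 < r`. -/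

theorem Nat.choose_add_choose_mul_lt_succ_choose_mul {n k r : ℕ} (hk : k < n) (hr : k + 2 < r) :
    n.choose (k + 1) + n.choose k * (n - k + r) < (n + 1).choose (k + 1) * r := by
  have hpos : 0 < n.choose (k + 1) := Nat.choose_pos hk
  have hratio : n.choose (k + 1) * (k + 1) = n.choose k * (n - k) := Nat.choose_succ_right_eq n k
  calc n.choose (k + 1) + n.choose k * (n - k + r)
      = n.choose (k + 1) * (k + 2) + n.choose k * r := by rw [mul_add, ← hratio]; ring
    _ < n.choose (k + 1) * r + n.choose k * r := by gcongr
    _ = (n + 1).choose (k + 1) * r := by rw [Nat.choose_succ_succ']; ring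

theorem mom_underdetermined_single_gce_general (M R l : ℕ) (hM : 2 ≤ M)
    (hl : 1 ≤ l) (hlR : l < R - 1) :
    Nat.choose (M + l - 2) l + Nat.choose (M + l - 2) (l - 1) * (M + R - 1)
      < Nat.choose (M + l - 1) l * R := by
  obtain ⟨k, rfl⟩ : ∃ k, l = k + 1 := ⟨l - 1, by omega⟩
  have h := Nat.choose_add_choose_mul_lt_succ_choose_mul (n := M + k - 1) (k := k) (r := R)
    (by omega) (by omega)
  rwa [show M + (k + 1) - 2 = M + k - 1 by omega, show M + (k + 1) - 1 = M + k - 1 + 1 by omega,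
    show M + R - 1 = M + k - 1 - k + R by omega, Nat.add_sub_cancel]

/-- For M ≥ 2, R ≥ 2 and 1 ≤ l < R - 1 the single-GCE system is under-determined:
    C(M+l-2,l) + C(M+l-2,l-1)·(M+R-1) < C(M+l-1,l)·R. -/
theorem mom_underdetermined_single_gce (M R l : ℕ) (hM : 2 ≤ M) (hR : 2 ≤ R)
    (hl : 1 ≤ l) (hlR : l < R - 1) :
    Nat.choose (M + l - 2) l + Nat.choose (M + l - 2) (l - 1) * (M + R - 1)
      < Nat.choose (M + l - 1) l * R :=
  mom_underdetermined_single_gce_general M R l hM hl hlR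
end
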